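/- arXiv:quant-ph/0506134 — 7 statements merged into one kernel-verified Lean document; each statement's English description precedes it below -/
import Mathlib

section
/- Let H₁ and H₂ be finite-dimensional complex inner product spaces, let f, g : H₁ →ₗ[ℂ] H₂ be linear maps, and let s, t : ℂ be scalars with s * (starRingEnd ℂ s) = 1 and t * (starRingEnd ℂ t) = 1. If s • f = t • g, then TensorProduct.map f (LinearMap.adjoint f) = TensorProduct.map g (LinearMap.adjoint g). -/
/-! Rescaling `f` by `c` rescales `f†` by `conj c`, so `f ⊗ f†` is rescaled by `c * conj c = |c|²`.
A global phase is therefore invisible in `f ⊗ f†`, and `s • f = t • g` with `|s| = |t| = 1` gives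
`f ⊗ f† = (s • f) ⊗ (s • f)† = (t • g) ⊗ (t • g)† = g ⊗ g†`. -/

namespace TensorProduct

variable {𝕜 E F : Type*} [RCLike 𝕜]
  [NormedAddCommGroup E] [InnerProductSpace 𝕜 E] [FiniteDimensional 𝕜 E]
  [NormedAddCommGroup F] [InnerProductSpace 𝕜 F] [FiniteDimensional 𝕜 F]

theorem map_smul_adjoint_smul (c : 𝕜) (f : E →ₗ[𝕜] F) :
    map (c • f) (LinearMap.adjoint (c • f)) =
      (c * starRingEnd 𝕜 c) • map f (LinearMap.adjoint f) := by
  rw [LinearMap.adjoint.map_smulₛₗ, map_smul_left, map_smul_right, smul_smul]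

theorem map_smul_adjoint_smul_of_mul_conj_eq_one {c : 𝕜} (hc : c * starRingEnd 𝕜 c = 1)
    (f : E →ₗ[𝕜] F) :
    map (c • f) (LinearMap.adjoint (c • f)) = map f (LinearMap.adjoint f) := by
  rw [map_smul_adjoint_smul, hc, one_smul]

end TensorProduct

theorem stmt_0 {H₁ H₂ : Type*}
    [NormedAddCommGroup H₁] [InnerProductSpace ℂ H₁] [FiniteDimensional ℂ H₁]
    [NormedAddCommGroup H₂] [InnerProductSpace ℂ H₂] [FiniteDimensional ℂ H₂]
    (f g : H₁ →ₗ[ℂ] H₂) (s t : ℂ)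
    (hs : s * (starRingEnd ℂ) s = 1) (ht : t * (starRingEnd ℂ) t = 1)
    (h : s • f = t • g) :
    TensorProduct.map f (LinearMap.adjoint f) =
      TensorProduct.map g (LinearMap.adjoint g) := by
  rw [← TensorProduct.map_smul_adjoint_smul_of_mul_conj_eq_one hs f, h,
    TensorProduct.map_smul_adjoint_smul_of_mul_conj_eq_one ht g]
end

section
/- Let H₁ and H₂ be finite-dimensional complex inner product spaces and let f, g : H₁ →ₗ[ℂ] H₂ be linear maps with TensorProduct.map f (LinearMap.adjoint f) = TensorProduct.map g (LinearMap.adjoint g). Then, setting s := LinearMap.trace ℂ H₁ ((LinearMap.adjoint f) ∘ₗ f) and t := LinearMap.trace ℂ H₁ ((LinearMap.adjoint g) ∘ₗ f), one has s • f = t • g and s * (starRingEnd ℂ s) = t * (starRingEnd ℂ t). -/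
/-!
Write `s = Tr (f† f)` and `t = Tr (g† f)`. Contracting the second tensor factor of
`f x ⊗ f† y = g x ⊗ g† y` against `⟪x', ·⟫` gives `⟪f x', y⟫ • f x = ⟪g x', y⟫ • g x`; summing
this over `x' = bᵢ`, `y = f bᵢ` for an orthonormal basis `b` gives `s • f = t • g`. Applying the
Hilbert–Schmidt functional `φ ↦ Tr (f† φ)` to that identity gives `s * s = t * conj t`, and `s` is
real.
-/

open scoped InnerProductSpace

namespace TensorProduct

theorem smul_eq_smul_of_tmul_eq {R M N : Type*} [CommSemiring R] [AddCommMonoid M] [Module R M]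
    [AddCommMonoid N] [Module R N] {a c : M} {b d : N} (h : a ⊗ₜ[R] b = c ⊗ₜ[R] d)
    (φ : N →ₗ[R] R) : φ b • a = φ d • c := by
  simpa using congrArg (TensorProduct.rid R M ∘ TensorProduct.map LinearMap.id φ) h

end TensorProduct

namespace LinearMap

variable {𝕜 E F : Type*} [RCLike 𝕜]
  [NormedAddCommGroup E] [InnerProductSpace 𝕜 E] [FiniteDimensional 𝕜 E]
  [NormedAddCommGroup F] [InnerProductSpace 𝕜 F] [FiniteDimensional 𝕜 F]

theorem trace_adjoint_comp_eq_sum_inner {ι : Type*} [Fintype ι] (f g : E →ₗ[𝕜] F)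
    (b : OrthonormalBasis ι 𝕜 E) :
    trace 𝕜 E (adjoint g ∘ₗ f) = ∑ i, ⟪g (b i), f (b i)⟫_𝕜 := by
  simp only [trace_eq_sum_inner _ b, comp_apply, adjoint_inner_right]

theorem trace_adjoint_comp_comm (f g : E →ₗ[𝕜] F) :
    trace 𝕜 E (adjoint f ∘ₗ g) = starRingEnd 𝕜 (trace 𝕜 E (adjoint g ∘ₗ f)) := by
  simp only [trace_adjoint_comp_eq_sum_inner _ _ (stdOrthonormalBasis 𝕜 E), map_sum,
    inner_conj_symm]

theorem inner_smul_eq_of_map_adjoint_eq {f g : E →ₗ[𝕜] F}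
    (h : TensorProduct.map f (adjoint f) = TensorProduct.map g (adjoint g)) (x x' : E) (y : F) :
    ⟪f x', y⟫_𝕜 • f x = ⟪g x', y⟫_𝕜 • g x := by
  have htmul : f x ⊗ₜ[𝕜] adjoint f y = g x ⊗ₜ[𝕜] adjoint g y := by
    simpa using LinearMap.congr_fun h (x ⊗ₜ y)
  simpa only [innerₛₗ_apply_apply, adjoint_inner_right] using
    TensorProduct.smul_eq_smul_of_tmul_eq htmul (innerₛₗ 𝕜 x')

theorem trace_smul_eq_trace_smul_of_map_adjoint_eq {f g : E →ₗ[𝕜] F}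
    (h : TensorProduct.map f (adjoint f) = TensorProduct.map g (adjoint g)) :
    trace 𝕜 E (adjoint f ∘ₗ f) • f = trace 𝕜 E (adjoint g ∘ₗ f) • g := by
  ext x
  let b := stdOrthonormalBasis 𝕜 E
  simp only [smul_apply, trace_adjoint_comp_eq_sum_inner _ _ b, Finset.sum_smul, sum_apply]
  exact Finset.sum_congr rfl fun i _ ↦ inner_smul_eq_of_map_adjoint_eq h x (b i) (f (b i))

end LinearMap

theorem stmt_1 {H₁ H₂ : Type*}
    [NormedAddCommGroup H₁] [InnerProductSpace ℂ H₁] [FiniteDimensional ℂ H₁]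
    [NormedAddCommGroup H₂] [InnerProductSpace ℂ H₂] [FiniteDimensional ℂ H₂]
    (f g : H₁ →ₗ[ℂ] H₂)
    (h : TensorProduct.map f (LinearMap.adjoint f) =
      TensorProduct.map g (LinearMap.adjoint g)) :
    (LinearMap.trace ℂ H₁ ((LinearMap.adjoint f) ∘ₗ f)) • f =
      (LinearMap.trace ℂ H₁ ((LinearMap.adjoint g) ∘ₗ f)) • g ∧
    (LinearMap.trace ℂ H₁ ((LinearMap.adjoint f) ∘ₗ f)) *
        (starRingEnd ℂ) (LinearMap.trace ℂ H₁ ((LinearMap.adjoint f) ∘ₗ f)) =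
      (LinearMap.trace ℂ H₁ ((LinearMap.adjoint g) ∘ₗ f)) *
        (starRingEnd ℂ) (LinearMap.trace ℂ H₁ ((LinearMap.adjoint g) ∘ₗ f)) := by
  have hfg := LinearMap.trace_smul_eq_trace_smul_of_map_adjoint_eq h
  refine ⟨hfg, ?_⟩
  have hHS := congrArg (fun φ ↦ LinearMap.trace ℂ H₁ (LinearMap.adjoint f ∘ₗ φ)) hfg
  simp only [LinearMap.comp_smul, map_smul, smul_eq_mul] at hHS
  rwa [← LinearMap.trace_adjoint_comp_comm f f, ← LinearMap.trace_adjoint_comp_comm]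
end

section
/- Let H₁ and H₂ be finite-dimensional complex inner product spaces and let f, g : H₁ →ₗ[ℂ] H₂ be linear maps. Then TensorProduct.map f (LinearMap.adjoint f) = TensorProduct.map g (LinearMap.adjoint g) if and only if for every linear map h : H₁ →ₗ[ℂ] H₂ one has (LinearMap.trace ℂ H₁ ((LinearMap.adjoint f) ∘ₗ h)) • f = (LinearMap.trace ℂ H₁ ((LinearMap.adjoint g) ∘ₗ h)) • g. -/
open scoped TensorProduct ComplexConjugate
open InnerProductSpace

local notation "⟪" x ", " y "⟫" => @inner ℂ _ _ x y

lemma trace_eq_sum_inner' {E : Type*} [NormedAddCommGroup E] [InnerProductSpace ℂ E]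
    [FiniteDimensional ℂ E] {ι : Type*} [Fintype ι] [DecidableEq ι]
    (b : OrthonormalBasis ι ℂ E) (T : E →ₗ[ℂ] E) :
    LinearMap.trace ℂ E T = ∑ i, ⟪b i, T (b i)⟫ := by
  rw [LinearMap.trace_eq_matrix_trace ℂ b.toBasis, Matrix.trace]
  congr 1
  ext i
  rw [Matrix.diag_apply, LinearMap.toMatrix_apply, b.coe_toBasis_repr_apply,
    b.repr_apply_apply, b.coe_toBasis]

theorem stmt_4 {H₁ H₂ : Type*}
    [NormedAddCommGroup H₁] [InnerProductSpace ℂ H₁] [FiniteDimensional ℂ H₁]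
    [NormedAddCommGroup H₂] [InnerProductSpace ℂ H₂] [FiniteDimensional ℂ H₂]
    (f g : H₁ →ₗ[ℂ] H₂) :
    TensorProduct.map f (LinearMap.adjoint f) =
      TensorProduct.map g (LinearMap.adjoint g) ↔
    ∀ h : H₁ →ₗ[ℂ] H₂,
      (LinearMap.trace ℂ H₁ ((LinearMap.adjoint f) ∘ₗ h)) • f =
        (LinearMap.trace ℂ H₁ ((LinearMap.adjoint g) ∘ₗ h)) • g := by
  classical
  let b : OrthonormalBasis (Fin (Module.finrank ℂ H₁)) ℂ H₁ :=
    stdOrthonormalBasis ℂ H₁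
  -- core condition C
  have key : (TensorProduct.map f (LinearMap.adjoint f) =
      TensorProduct.map g (LinearMap.adjoint g)) ↔
      ∀ u v, ⟪u, LinearMap.adjoint f v⟫ • f = ⟪u, LinearMap.adjoint g v⟫ • g := by
    constructor
    · intro hEq u v
      ext w
      have h1 : f w ⊗ₜ[ℂ] (LinearMap.adjoint f v) = g w ⊗ₜ[ℂ] (LinearMap.adjoint g v) := by
        have := congrArg (fun T => T (w ⊗ₜ[ℂ] v)) hEq
        simpa using this
      have L : (H₂ ⊗[ℂ] H₁) →ₗ[ℂ] H₂ :=
        (TensorProduct.rid ℂ H₂).toLinearMap ∘ₗ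
          TensorProduct.map LinearMap.id (innerSL ℂ u).toLinearMap
      have := congrArg ((TensorProduct.rid ℂ H₂).toLinearMap ∘ₗ
          TensorProduct.map LinearMap.id (innerSL ℂ u).toLinearMap) h1
      simpa [TensorProduct.smul_tmul', smul_smul] using this
    · intro hC
      apply TensorProduct.ext'
      intro x y
      have e1 : (LinearMap.adjoint f) y = ∑ i, ⟪b i, (LinearMap.adjoint f) y⟫ • b i :=
        (b.sum_repr' _).symm
      have e2 : (LinearMap.adjoint g) y = ∑ i, ⟪b i, (LinearMap.adjoint g) y⟫ • b i :=
        (b.sum_repr' _).symm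
      simp only [TensorProduct.map_tmul]
      rw [e1, e2, TensorProduct.tmul_sum, TensorProduct.tmul_sum]
      refine Finset.sum_congr rfl fun i _ => ?_
      have hx := congrFun (congrArg DFunLike.coe (hC (b i) y)) x
      simp only [LinearMap.smul_apply] at hx
      rw [TensorProduct.tmul_smul, TensorProduct.tmul_smul,
        TensorProduct.smul_tmul', TensorProduct.smul_tmul', hx]
  rw [key]
  constructor
  · intro hC h
    rw [trace_eq_sum_inner' b, trace_eq_sum_inner' b, Finset.sum_smul, Finset.sum_smul]
    refine Finset.sum_congr rfl fun i _ => ?_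
    simpa using hC (b i) (h (b i))
  · intro hT u v
    set h : H₁ →ₗ[ℂ] H₂ := ((innerSL ℂ u).toLinearMap).smulRight v with hh
    have htr : ∀ (k : H₁ →ₗ[ℂ] H₂),
        LinearMap.trace ℂ H₁ ((LinearMap.adjoint k) ∘ₗ h) = ⟪u, LinearMap.adjoint k v⟫ := by
      intro k
      rw [trace_eq_sum_inner' b]
      have : ∀ i, ⟪b i, ((LinearMap.adjoint k) ∘ₗ h) (b i)⟫
          = ⟪u, b i⟫ * ⟪b i, LinearMap.adjoint k v⟫ := by
        intro i
        simp [hh, inner_smul_right, LinearMap.smulRight_apply, map_smul]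
      rw [Finset.sum_congr rfl fun i _ => this i]
      exact b.sum_inner_mul_inner u _
    have := hT h
    rwa [htr f, htr g] at this
end

section
/- Let H₁, H₂, H₃ be finite-dimensional complex inner product spaces, let f, f' : H₁ →ₗ[ℂ] H₂ and g, g' : H₂ →ₗ[ℂ] H₃ be linear maps with TensorProduct.map f (LinearMap.adjoint f) = TensorProduct.map f' (LinearMap.adjoint f') and TensorProduct.map g (LinearMap.adjoint g) = TensorProduct.map g' (LinearMap.adjoint g'). Then TensorProduct.map (g ∘ₗ f) (LinearMap.adjoint (g ∘ₗ f)) = TensorProduct.map (g' ∘ₗ f') (LinearMap.adjoint (g' ∘ₗ f')). -/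
open TensorProduct

noncomputable section

local notation "⟪" x ", " y "⟫" => @inner ℂ _ _ x y

private def pairFun {H K : Type*} [NormedAddCommGroup H] [InnerProductSpace ℂ H]
    [NormedAddCommGroup K] [InnerProductSpace ℂ K] (u₀ : H) (v₀ : K) :
    H ⊗[ℂ] K →ₗ[ℂ] ℂ :=
  TensorProduct.lift (LinearMap.mk₂ ℂ (fun x y => ⟪u₀, x⟫ * ⟪v₀, y⟫)
    (by intros; simp [inner_add_right]; ring)
    (by intros; simp [inner_smul_right, smul_eq_mul]; ring)
    (by intros; simp [inner_add_right]; ring)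
    (by intros; simp [inner_smul_right, smul_eq_mul]; ring))

@[simp] private lemma pairFun_tmul {H K : Type*} [NormedAddCommGroup H]
    [InnerProductSpace ℂ H] [NormedAddCommGroup K] [InnerProductSpace ℂ K]
    (u₀ x : H) (v₀ y : K) : pairFun u₀ v₀ (x ⊗ₜ y) = ⟪u₀, x⟫ * ⟪v₀, y⟫ := rfl

private def lFun {H K : Type*} [NormedAddCommGroup H] [InnerProductSpace ℂ H]
    [NormedAddCommGroup K] [InnerProductSpace ℂ K] (v₀ : K) :
    H ⊗[ℂ] K →ₗ[ℂ] H :=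
  TensorProduct.lift (LinearMap.mk₂ ℂ (fun x y => ⟪v₀, y⟫ • x)
    (by intros; simp [smul_add, add_smul]
    )
    (by intros; simp [smul_smul]; ring_nf)
    (by intros; simp [inner_add_right, add_smul])
    (by intros; simp [inner_smul_right, smul_smul]))

@[simp] private lemma lFun_tmul {H K : Type*} [NormedAddCommGroup H]
    [InnerProductSpace ℂ H] [NormedAddCommGroup K] [InnerProductSpace ℂ K]
    (x : H) (v₀ y : K) : lFun v₀ (x ⊗ₜ y) = ⟪v₀, y⟫ • x := rfl

private lemma tmul_ne_zero' {H K : Type*} [NormedAddCommGroup H]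
    [InnerProductSpace ℂ H] [NormedAddCommGroup K] [InnerProductSpace ℂ K]
    {u : H} {v : K} (hu : u ≠ 0) (hv : v ≠ 0) : u ⊗ₜ[ℂ] v ≠ 0 := by
  intro h
  have := congrArg (pairFun u v) h
  simp at this
  rcases this with h1 | h1
  · exact hu h1
  · exact hv h1

private lemma map_smul_smul' {H₁ H₂ H₃ H₄ : Type*}
    [AddCommGroup H₁] [Module ℂ H₁] [AddCommGroup H₂] [Module ℂ H₂]
    [AddCommGroup H₃] [Module ℂ H₃] [AddCommGroup H₄] [Module ℂ H₄]
    (c d : ℂ) (p : H₁ →ₗ[ℂ] H₂) (q : H₃ →ₗ[ℂ] H₄) :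
    TensorProduct.map (c • p) (d • q) = (c * d) • TensorProduct.map p q := by
  apply TensorProduct.ext'
  intro x y
  simp [TensorProduct.smul_tmul', TensorProduct.tmul_smul, smul_smul, mul_comm]

private lemma adjoint_smul'' {E F : Type*}
    [NormedAddCommGroup E] [InnerProductSpace ℂ E] [FiniteDimensional ℂ E]
    [NormedAddCommGroup F] [InnerProductSpace ℂ F] [FiniteDimensional ℂ F]
    (a : ℂ) (f : E →ₗ[ℂ] F) :
    LinearMap.adjoint (a • f) = starRingEnd ℂ a • LinearMap.adjoint f :=
  map_smulₛₗ (LinearMap.adjoint :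
    (E →ₗ[ℂ] F) ≃ₗ⋆[ℂ] (F →ₗ[ℂ] E)) a f

private lemma key {H₁ H₂ : Type*}
    [NormedAddCommGroup H₁] [InnerProductSpace ℂ H₁] [FiniteDimensional ℂ H₁]
    [NormedAddCommGroup H₂] [InnerProductSpace ℂ H₂] [FiniteDimensional ℂ H₂]
    (f f' : H₁ →ₗ[ℂ] H₂)
    (h : TensorProduct.map f (LinearMap.adjoint f) =
      TensorProduct.map f' (LinearMap.adjoint f')) :
    ∃ a : ℂ, a * starRingEnd ℂ a = 1 ∧ f' = a • f := by
  by_cases hf : f = 0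
  · have hz : f' = 0 := by
      subst hf
      by_contra hf'
      obtain ⟨x, hx⟩ : ∃ x, f' x ≠ 0 := by
        by_contra hall
        push_neg at hall
        exact hf' (LinearMap.ext fun x => by simpa using hall x)
      have hadj : LinearMap.adjoint f' ≠ 0 := by
        intro h0
        apply hf'
        have := congrArg (LinearMap.adjoint) h0
        rwa [LinearMap.adjoint_adjoint, map_zero] at this
      obtain ⟨y, hy⟩ : ∃ y, LinearMap.adjoint f' y ≠ 0 := by
        by_contra hall
        push_neg at hall
        exact hadj (LinearMap.ext fun y => by simpa using hall y)
      have h0 := congrArg (fun T : H₁ ⊗[ℂ] H₂ →ₗ[ℂ] H₂ ⊗[ℂ] H₁ => T (x ⊗ₜ y)) h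
      simp only [TensorProduct.map_tmul, map_zero, LinearMap.zero_apply,
        TensorProduct.zero_tmul] at h0
      exact tmul_ne_zero' hx hy h0.symm
    exact ⟨1, by simp, by rw [hz, hf, smul_zero]⟩
  · -- f ≠ 0
    obtain ⟨x₀, hx₀⟩ : ∃ x, f x ≠ 0 := by
      by_contra hall
      push_neg at hall
      exact hf (LinearMap.ext fun x => by simpa using hall x)
    have hadj : LinearMap.adjoint f ≠ 0 := by
      intro h0
      apply hf
      have := congrArg (LinearMap.adjoint) h0
      rwa [LinearMap.adjoint_adjoint, map_zero] at this
    obtain ⟨y₀, hy₀⟩ : ∃ y, LinearMap.adjoint f y ≠ 0 := by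
      by_contra hall
      push_neg at hall
      exact hadj (LinearMap.ext fun y => by simpa using hall y)
    set v₀ := LinearMap.adjoint f y₀ with hv₀
    have main : ∀ x : H₁, ⟪v₀, LinearMap.adjoint f y₀⟫ • f x
        = ⟪v₀, LinearMap.adjoint f' y₀⟫ • f' x := by
      intro x
      have hxy : TensorProduct.map f (LinearMap.adjoint f) (x ⊗ₜ y₀)
          = TensorProduct.map f' (LinearMap.adjoint f') (x ⊗ₜ y₀) := by rw [h]
      simpa using congrArg (lFun (H := H₂) v₀) hxy
    set b : ℂ := ⟪v₀, LinearMap.adjoint f y₀⟫ with hb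
    set c : ℂ := ⟪v₀, LinearMap.adjoint f' y₀⟫ with hc
    have hbne : b ≠ 0 := by
      rw [hb, ← hv₀]
      exact inner_self_ne_zero.mpr hy₀
    have hcne : c ≠ 0 := by
      intro h0
      have h2 := main x₀
      rw [h0, zero_smul] at h2
      rcases smul_eq_zero.mp h2 with h3 | h3
      · exact hbne h3
      · exact hx₀ h3
    have hfeq : f' = (b / c) • f := by
      apply LinearMap.ext
      intro x
      have hm := main x
      have hfx : f' x = (b / c) • f x := by
        calc f' x = c⁻¹ • (c • f' x) := by
              rw [smul_smul, inv_mul_cancel₀ hcne, one_smul]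
          _ = c⁻¹ • (b • f x) := by rw [← hm]
          _ = (b / c) • f x := by rw [smul_smul, div_eq_mul_inv, mul_comm]
      simpa using hfx
    refine ⟨b / c, ?_, hfeq⟩
    set a : ℂ := b / c with ha
    have hadj' : LinearMap.adjoint f' = starRingEnd ℂ a • LinearMap.adjoint f := by
      rw [hfeq]
      exact adjoint_smul'' a f
    rw [hfeq, adjoint_smul'', map_smul_smul'] at h
    have happ := congrArg
      (fun T : H₁ ⊗[ℂ] H₂ →ₗ[ℂ] H₂ ⊗[ℂ] H₁ => pairFun (f x₀) v₀ (T (x₀ ⊗ₜ y₀))) h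
    simp only [TensorProduct.map_tmul, LinearMap.smul_apply, map_smul,
      pairFun_tmul, smul_eq_mul] at happ
    have hp : (⟪f x₀, f x₀⟫ * ⟪v₀, v₀⟫ : ℂ) ≠ 0 :=
      mul_ne_zero (inner_self_ne_zero.mpr hx₀) (inner_self_ne_zero.mpr hy₀)
    have h3 : (a * starRingEnd ℂ a) * (⟪f x₀, f x₀⟫ * ⟪v₀, v₀⟫) =
        (1 : ℂ) * (⟪f x₀, f x₀⟫ * ⟪v₀, v₀⟫) := by
      rw [← hv₀] at happ
      linear_combination - happ
    exact mul_right_cancel₀ hp h3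

theorem stmt_5 {H₁ H₂ H₃ : Type*}
    [NormedAddCommGroup H₁] [InnerProductSpace ℂ H₁] [FiniteDimensional ℂ H₁]
    [NormedAddCommGroup H₂] [InnerProductSpace ℂ H₂] [FiniteDimensional ℂ H₂]
    [NormedAddCommGroup H₃] [InnerProductSpace ℂ H₃] [FiniteDimensional ℂ H₃]
    (f f' : H₁ →ₗ[ℂ] H₂) (g g' : H₂ →ₗ[ℂ] H₃)
    (hf : TensorProduct.map f (LinearMap.adjoint f) =
      TensorProduct.map f' (LinearMap.adjoint f'))
    (hg : TensorProduct.map g (LinearMap.adjoint g) =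
      TensorProduct.map g' (LinearMap.adjoint g')) :
    TensorProduct.map (g ∘ₗ f) (LinearMap.adjoint (g ∘ₗ f)) =
      TensorProduct.map (g' ∘ₗ f') (LinearMap.adjoint (g' ∘ₗ f')) := by
  obtain ⟨a, ha, hfa⟩ := key f f' hf
  obtain ⟨b, hb, hgb⟩ := key g g' hg
  have hcomp : g' ∘ₗ f' = (b * a) • (g ∘ₗ f) := by
    rw [hfa, hgb]
    ext x
    simp [smul_smul, mul_comm]
  rw [hcomp, adjoint_smul'', map_smul_smul']
  have : (b * a) * starRingEnd ℂ (b * a) = 1 := by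
    rw [map_mul]
    calc (b * a) * (starRingEnd ℂ b * starRingEnd ℂ a)
        = (b * starRingEnd ℂ b) * (a * starRingEnd ℂ a) := by ring
      _ = 1 := by rw [ha, hb, one_mul]
  rw [this, one_smul]

end
end

section
/- The monoidal sum is ill-defined on phase-equivalence classes in FdHilb: it is NOT the case that for all linear maps f, f', g, g' : ℂ →ₗ[ℂ] ℂ with TensorProduct.map f (LinearMap.adjoint f) = TensorProduct.map f' (LinearMap.adjoint f') and TensorProduct.map g (LinearMap.adjoint g) = TensorProduct.map g' (LinearMap.adjoint g'), one has TensorProduct.map (f ⊞ g) (LinearMap.adjoint (f ⊞ g)) = TensorProduct.map (f' ⊞ g') (LinearMap.adjoint (f' ⊞ g')), where f ⊞ g denotes the direct-sum operator on WithLp 2 (ℂ × ℂ) acting as f on the first coordinate and as g on the second. (A witness is f = f' = g = id and g' = multiplication by Complex.I.) -/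
/-!
A phase `c` with `‖c‖ = 1` cancels in `f ⊗ f†`, so `id` and `i • id` are in the same class.
Their direct sums with `id` are not: with `T = id ⊕ i • id`, the map `T ⊗ T†` sends `e₂ ⊗ e₁`
to `i • (e₂ ⊗ e₁)`, while `(id ⊕ id) ⊗ (id ⊕ id)†` fixes it.
-/

/-- The direct-sum (block-diagonal) operator on the ℓ²-biproduct `WithLp 2 (ℂ × ℂ)`,
acting as `f` on the first coordinate and as `g` on the second. -/
noncomputable def dirSum (f g : ℂ →ₗ[ℂ] ℂ) :
    WithLp 2 (ℂ × ℂ) →ₗ[ℂ] WithLp 2 (ℂ × ℂ) :=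
  (WithLp.linearEquiv 2 ℂ (ℂ × ℂ)).symm.toLinearMap ∘ₗ
    (LinearMap.prodMap f g) ∘ₗ (WithLp.linearEquiv 2 ℂ (ℂ × ℂ)).toLinearMap

open TensorProduct

section

variable {𝕜 E F : Type*} [RCLike 𝕜] [NormedAddCommGroup E] [InnerProductSpace 𝕜 E]
  [NormedAddCommGroup F] [InnerProductSpace 𝕜 F]

theorem TensorProduct.tmul_ne_zero {v : E} {w : F} (hv : v ≠ 0) (hw : w ≠ 0) :
    v ⊗ₜ[𝕜] w ≠ 0 := by
  intro h
  have hvw : inner 𝕜 v v * inner 𝕜 w w = 0 := by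
    simpa only [lift.tmul, LinearMap.compl₁₂_apply, innerₛₗ_apply_apply, LinearMap.mul_apply',
      map_zero] using
      congrArg (lift ((LinearMap.mul 𝕜 𝕜).compl₁₂ (innerₛₗ 𝕜 v) (innerₛₗ 𝕜 w))) h
  rcases mul_eq_zero.1 hvw with hv' | hw'
  exacts [hv (inner_self_eq_zero.1 hv'), hw (inner_self_eq_zero.1 hw')]

theorem TensorProduct.map_adjoint_smul_of_norm_eq_one [FiniteDimensional 𝕜 E]
    [FiniteDimensional 𝕜 F] (f : E →ₗ[𝕜] F) {c : 𝕜} (hc : ‖c‖ = 1) :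
    map (c • f) (LinearMap.adjoint (c • f)) = map f (LinearMap.adjoint f) := by
  rw [map_smulₛₗ, map_smul_left, map_smul_right, smul_smul, RCLike.mul_conj, hc]
  simp

end

@[simp]
theorem dirSum_apply (f g : ℂ →ₗ[ℂ] ℂ) (x : WithLp 2 (ℂ × ℂ)) :
    dirSum f g x = WithLp.toLp 2 (f x.fst, g x.snd) := rfl

theorem adjoint_dirSum (f g : ℂ →ₗ[ℂ] ℂ) :
    LinearMap.adjoint (dirSum f g) = dirSum (LinearMap.adjoint f) (LinearMap.adjoint g) := by
  symm
  rw [LinearMap.eq_adjoint_iff]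
  intro x y
  simp only [dirSum_apply, WithLp.prod_inner_apply, LinearMap.adjoint_inner_left]
  rfl

theorem stmt_13 :
    ¬ (∀ f f' g g' : ℂ →ₗ[ℂ] ℂ,
      TensorProduct.map f (LinearMap.adjoint f) =
        TensorProduct.map f' (LinearMap.adjoint f') →
      TensorProduct.map g (LinearMap.adjoint g) =
        TensorProduct.map g' (LinearMap.adjoint g') →
      TensorProduct.map (dirSum f g) (LinearMap.adjoint (dirSum f g)) =
        TensorProduct.map (dirSum f' g') (LinearMap.adjoint (dirSum f' g'))) := by
  intro h
  have key := h LinearMap.id LinearMap.id LinearMap.id (Complex.I • LinearMap.id) rfl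
    (map_adjoint_smul_of_norm_eq_one _ Complex.norm_I).symm
  set e₁ : WithLp 2 (ℂ × ℂ) := WithLp.toLp 2 (1, 0)
  set e₂ : WithLp 2 (ℂ × ℂ) := WithLp.toLp 2 (0, 1)
  have hI : e₂ ⊗ₜ[ℂ] e₁ = (Complex.I • e₂) ⊗ₜ[ℂ] e₁ := by
    simpa [adjoint_dirSum, e₁, e₂, ← WithLp.toLp_smul] using
      congrArg (· (e₂ ⊗ₜ[ℂ] e₁)) key
  have hne : e₂ ⊗ₜ[ℂ] e₁ ≠ 0 := tmul_ne_zero (by simp [e₂]) (by simp [e₁])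
  have hI_one : Complex.I = 1 := smul_left_injective ℂ hne (by simpa [smul_tmul'] using hI.symm)
  simp [Complex.ext_iff] at hI_one
end

section
/- Let K be a field, let V and W be finite-dimensional K-vector spaces, and let f : V →ₗ[K] W. Then (TensorProduct.map f LinearMap.id) ∘ₗ coevaluation K V = (TensorProduct.map LinearMap.id (LinearMap.dualMap f)) ∘ₗ coevaluation K W, as linear maps K →ₗ[K] W ⊗[K] Module.Dual K V. -/
/-!
Identify `W ⊗ V*` with `Hom(V, W)` via `w ⊗ φ ↦ φ(·) • w`. Under this identification the
coevaluation `1 ↦ ∑ eᵢ ⊗ eᵢ*` is the identity of `V`, applying `f ⊗ 1` is postcomposition with `f`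
and applying `1 ⊗ f*` is precomposition with `f`; so both sides of the identity send `1` to `f`.
-/

open TensorProduct

section dualTensorHom

variable {R M N P : Type*} [CommRing R] [AddCommGroup M] [Module R M]
  [AddCommGroup N] [Module R N] [AddCommGroup P] [Module R P]

theorem dualTensorHom_comm_map_left (g : N →ₗ[R] P) (x : N ⊗[R] Module.Dual R M) :
    dualTensorHom R M P (TensorProduct.comm R P _ (map g LinearMap.id x)) =
      g ∘ₗ dualTensorHom R M N (TensorProduct.comm R N _ x) := by
  induction x using TensorProduct.induction_on with
  | zero => simp
  | tmul n φ => ext m; simp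
  | add x y hx hy => simp only [map_add, hx, hy, LinearMap.comp_add]

theorem dualTensorHom_comm_map_dualMap (g : M →ₗ[R] N) (x : P ⊗[R] Module.Dual R N) :
    dualTensorHom R M P (TensorProduct.comm R P _ (map LinearMap.id g.dualMap x)) =
      dualTensorHom R N P (TensorProduct.comm R P _ x) ∘ₗ g := by
  induction x using TensorProduct.induction_on with
  | zero => simp
  | tmul p φ => ext m; simp
  | add x y hx hy => simp only [map_add, hx, hy, LinearMap.add_comp]

end dualTensorHom

theorem dualTensorHom_comm_coevaluation_one (K V : Type*) [Field K] [AddCommGroup V] [Module K V]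
    [FiniteDimensional K V] :
    dualTensorHom K V V (TensorProduct.comm K V _ (coevaluation K V 1)) = LinearMap.id := by
  ext v
  simpa [coevaluation_apply_one] using (Module.Basis.ofVectorSpace K V).sum_repr v

theorem stmt_14 (K : Type*) [Field K] {V W : Type*}
    [AddCommGroup V] [Module K V] [FiniteDimensional K V]
    [AddCommGroup W] [Module K W] [FiniteDimensional K W]
    (f : V →ₗ[K] W) :
    (TensorProduct.map f LinearMap.id) ∘ₗ coevaluation K V =
      (TensorProduct.map LinearMap.id (LinearMap.dualMap f)) ∘ₗ coevaluation K W := by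
  refine LinearMap.ext_ring (dualTensorHom_bijective.injective.comp
    (TensorProduct.comm K W (Module.Dual K V)).injective ?_)
  simp only [Function.comp_apply, LinearMap.comp_apply, dualTensorHom_comm_map_left,
    dualTensorHom_comm_map_dualMap, dualTensorHom_comm_coevaluation_one, LinearMap.comp_id,
    LinearMap.id_comp]
end

section
/- WProj(FdHilb) contains no nontrivial global phases: let H₁ and H₂ be finite-dimensional complex inner product spaces, let f, g : H₁ →ₗ[ℂ] H₂ be linear maps, and let z : ℂ with ‖z‖ = 1. If TensorProduct.map f (LinearMap.adjoint f) = z • TensorProduct.map g (LinearMap.adjoint g), then TensorProduct.map f (LinearMap.adjoint f) = TensorProduct.map g (LinearMap.adjoint g). -/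
/-!
Evaluate both sides at `x ⊗ f x`, for some `x` with `f x ≠ 0`, and pair with `f x ⊗ x`.
For any `g` this matrix coefficient of `g ⊗ g†` equals `|⟪g x, f x⟫|²`, so the hypothesis becomes
`‖f x‖⁴ = z * |⟪g x, f x⟫|²`: a positive real is `z` times a nonnegative real, which together
with `‖z‖ = 1` forces `z = 1`.
-/

open scoped InnerProductSpace TensorProduct ComplexOrder

theorem Complex.eq_one_of_norm_eq_one_of_eq_mul {z a b : ℂ} (hz : ‖z‖ = 1) (ha : 0 < a)
    (hb : 0 ≤ b) (h : a = z * b) : z = 1 := by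
  have hab : a = b := by
    rw [Complex.eq_coe_norm_of_nonneg ha.le, Complex.eq_coe_norm_of_nonneg hb, h, norm_mul, hz,
      one_mul]
  rw [← hab] at h
  exact (mul_eq_right₀ ha.ne').mp h.symm

section

variable {𝕜 E F : Type*} [RCLike 𝕜]
  [NormedAddCommGroup E] [InnerProductSpace 𝕜 E] [FiniteDimensional 𝕜 E]
  [NormedAddCommGroup F] [InnerProductSpace 𝕜 F] [FiniteDimensional 𝕜 F]

theorem TensorProduct.inner_tmul_map_adjoint_tmul (g : E →ₗ[𝕜] F) (x : E) (v : F) :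
    ⟪v ⊗ₜ x, TensorProduct.map g (LinearMap.adjoint g) (x ⊗ₜ v)⟫_𝕜 =
      ((‖⟪g x, v⟫_𝕜‖ ^ 2 : ℝ) : 𝕜) := by
  rw [TensorProduct.map_tmul, TensorProduct.inner_tmul, LinearMap.adjoint_inner_right,
    ← inner_conj_symm, RCLike.conj_mul]
  norm_cast

end

theorem stmt_15 {H₁ H₂ : Type*}
    [NormedAddCommGroup H₁] [InnerProductSpace ℂ H₁] [FiniteDimensional ℂ H₁]
    [NormedAddCommGroup H₂] [InnerProductSpace ℂ H₂] [FiniteDimensional ℂ H₂]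
    (f g : H₁ →ₗ[ℂ] H₂) (z : ℂ) (hz : ‖z‖ = 1)
    (h : TensorProduct.map f (LinearMap.adjoint f) =
      z • TensorProduct.map g (LinearMap.adjoint g)) :
    TensorProduct.map f (LinearMap.adjoint f) =
      TensorProduct.map g (LinearMap.adjoint g) := by
  obtain rfl | ⟨x, hx⟩ : f = 0 ∨ ∃ x, f x ≠ 0 := by
    by_contra! hf
    exact hf.1 (LinearMap.ext hf.2)
  · have hz0 : z ≠ 0 := by rintro rfl; simp at hz
    rw [TensorProduct.map_zero_left, eq_comm, smul_eq_zero] at h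
    rw [TensorProduct.map_zero_left, h.resolve_left hz0]
  · have hcoeff := congrArg (fun T => ⟪f x ⊗ₜ x, T (x ⊗ₜ f x)⟫_ℂ) h
    simp only [LinearMap.smul_apply, inner_smul_right,
      TensorProduct.inner_tmul_map_adjoint_tmul] at hcoeff
    have hz1 : z = 1 := Complex.eq_one_of_norm_eq_one_of_eq_mul hz
      (Complex.zero_lt_real.mpr (pow_pos (norm_pos_iff.mpr (inner_self_ne_zero.mpr hx)) 2))
      (by positivity) hcoeff
    rw [h, hz1, one_smul]
end
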